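/- arXiv:1705.02805 — 4 statements merged into one kernel-verified Lean document; each statement's English description precedes it below -/
import Mathlib

section
/- Let u ∈ C^∞(ℝ³;ℝ³) ∩ H^l(ℝ³) and let G satisfy the stated structural conditions. For a multi-derivative ∂^n = ∂_{x_{σ(n)}}···∂_{x_{σ(1)}} (with each σ(i) ∈ {1,2,3}), define E_n := ∂^n G[|Du|²] − 2 G'[|Du|²](Du : ∂^n Du). Then there is a constant C, depending only on the structural constants of G, such that pointwise on ℝ³: |E₂| ≤ C G[|Du|²] |∇Du|², and |E₃| ≤ C G[|Du|²] (|∇Du|³ + |∇²Du| |∇Du|). -/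
open MeasureTheory Set ENNReal

noncomputable section

/-- Points of ℝ³. -/
abbrev E3 : Type := Fin 3 → ℝ

/-- 3×3 real matrices (as nested functions). -/
abbrev Mat3 : Type := Fin 3 → Fin 3 → ℝ

/-- Partial derivative in the `i`-th coordinate direction. -/
def pd {F : Type*} [NormedAddCommGroup F] [NormedSpace ℝ F]
    (i : Fin 3) (f : E3 → F) (x : E3) : F :=
  fderiv ℝ f x (Pi.single i 1)

/-- Iterated directional partial derivative ∂_{σ(n)} ⋯ ∂_{σ(1)}. -/
def pdIter {F : Type*} [NormedAddCommGroup F] [NormedSpace ℝ F]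
    (σ : ℕ → Fin 3) : ℕ → (E3 → F) → (E3 → F)
  | 0, f => f
  | n + 1, f => pd (σ (n + 1)) (pdIter σ n f)

/-- Symmetric gradient `Du`. -/
def symGrad (u : E3 → E3) (x : E3) : Mat3 :=
  fun i j => (pd j (fun y => u y i) x + pd i (fun y => u y j) x) / 2

/-- Frobenius inner product `A : B`. -/
def mdot (A B : Mat3) : ℝ := ∑ i, ∑ j, A i j * B i j

/-- `|A|² = A : A`. -/
def msq (A : Mat3) : ℝ := mdot A A

/-- Divergence of a vector field. -/
def divVec (u : E3 → E3) (x : E3) : ℝ := ∑ i, pd i (fun y => u y i) x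

/-- A vector field is divergence free. -/
def divFree (u : E3 → E3) : Prop := ∀ x, divVec u x = 0

/-- Structural conditions on the viscosity function `G`. -/
structure GoodG (G : ℝ → ℝ) (m₀ : ℝ) (C : ℕ → ℝ) : Prop where
  smooth : ContDiff ℝ (⊤ : ℕ∞) G
  m₀_pos : 0 < m₀
  lower : ∀ s : ℝ, 0 ≤ s → m₀ ≤ G s
  lower' : ∀ s : ℝ, 0 ≤ s → m₀ ≤ G s + 2 * deriv G s * s
  deriv_bound : ∀ k : ℕ, 1 ≤ k → ∀ s : ℝ, 0 ≤ s → ∀ a : ℕ, a ≤ 1 →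
    |iteratedDeriv k G s * s ^ a| ≤ C k * |iteratedDeriv (k - 1) G s|

/-- The viscous stress tensor `G[|Du|²] Du`. -/
def stress (G : ℝ → ℝ) (u : E3 → E3) (x : E3) : Mat3 :=
  fun i j => G (msq (symGrad u x)) * symGrad u x i j

/-- The non-Newtonian system `∂ₜu − div(G[|Du|²]Du) + (u·∇)u + ∇p = 0`, `div u = 0`,
pointwise on `ℝ³ × (0, T)`. -/
def NNSystem (G : ℝ → ℝ) (u : ℝ → E3 → E3) (p : ℝ → E3 → ℝ) (T : ℝ) : Prop :=
  ∀ t : ℝ, 0 < t → t < T →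
    divFree (u t) ∧
    ∀ x : E3, ∀ i : Fin 3,
      deriv (fun s => u s x i) t
        - (∑ j, pd j (fun y => stress G (u t) y i j) x)
        + (∑ j, u t x j * pd j (fun y => u t y i) x)
        + pd i (p t) x = 0

/-- Sobolev `H^l`-norm (valued in `ℝ≥0∞`). -/
def HNorm {F : Type*} [NormedAddCommGroup F] [NormedSpace ℝ F]
    (l : ℕ) (f : E3 → F) : ℝ≥0∞ :=
  ∑ k ∈ Finset.range (l + 1), eLpNorm (fun x => iteratedFDeriv ℝ k f x) 2 volume

/-- Membership in the class `L^∞(0,T;H^l) ∩ L²(0,T;H^{l+1})`. -/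
def InClassX (l : ℕ) (T : ℝ) (u : ℝ → E3 → E3) : Prop :=
  (⨆ t ∈ Icc (0:ℝ) T, HNorm l (u t)) < ⊤ ∧
  (∫⁻ t in Icc (0:ℝ) T, (HNorm (l + 1) (u t)) ^ 2) < ⊤

/-- Time derivative of a time-dependent field. -/
def tD {F : Type*} [NormedAddCommGroup F] [NormedSpace ℝ F]
    (f : ℝ → E3 → F) : ℝ → E3 → F :=
  fun t x => deriv (fun s => f s x) t

/-- The error term `E_n = ∂ⁿ(G[|Du|²]) − 2 G'[|Du|²](Du : ∂ⁿDu)`. -/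
def Eerr (G : ℝ → ℝ) (u : E3 → E3) (σ : ℕ → Fin 3) (n : ℕ) (x : E3) : ℝ :=
  pdIter σ n (fun y => G (msq (symGrad u y))) x
    - 2 * deriv G (msq (symGrad u x)) *
        mdot (symGrad u x) (fun i j => pdIter σ n (fun y => symGrad u y i j) x)

/-- Entrywise iterated derivative of `Du`. -/
def DuIter (u : E3 → E3) (τ : ℕ → Fin 3) (n : ℕ) (x : E3) : Mat3 :=
  fun i j => pdIter τ n (fun y => symGrad u y i j) x

end

/-!
Write `q = |Du|²`. The chain rule gives
`∂_b∂_a G[q] = G''[q] ∂_b q ∂_a q + G'[q] ∂_b∂_a q` with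
`∂_b∂_a q = 2 (∂_b Du : ∂_a Du + Du : ∂_b∂_a Du)`, so the only term containing the top-order
derivative of `Du` is exactly the one subtracted in `E₂`; the same happens for `E₃`. Every
remaining term is `G⁽ᵏ⁾[q]` times at most `k` factors `|Du|` times derivatives of `Du` of the
orders on the right-hand side, because `|∂q| ≲ |Du| |∇Du|`. The structural condition with
`α = 0` and `α = 1` gives `|G⁽ᵏ⁾[s]| (1 + s) ≤ 2 |C_k| |G⁽ᵏ⁻¹⁾[s]|`, hence by induction
`|G⁽ᵏ⁾[s]| |Du|ʲ ≤ |G⁽ᵏ⁾[s]| (1 + s)ᵏ ≲ G[s]` for `j ≤ k`.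
-/

open scoped ContDiff

section PartialDerivatives

variable {F : Type*} [NormedAddCommGroup F] [NormedSpace ℝ F]

@[fun_prop]
theorem ContDiff.pd {f : E3 → F} (hf : ContDiff ℝ ∞ f) (i : Fin 3) : ContDiff ℝ ∞ (pd i f) :=
  (hf.fderiv_right le_rfl).clm_apply contDiff_const

theorem ContDiff.pdIter {f : E3 → F} (hf : ContDiff ℝ ∞ f) (σ : ℕ → Fin 3) :
    ∀ n, ContDiff ℝ ∞ (pdIter σ n f)
  | 0 => hf
  | n + 1 => (hf.pdIter σ n).pd _

theorem pd_apply {ι : Type*} [Fintype ι] {f : E3 → ι → F} (hf : Differentiable ℝ f)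
    (k : Fin 3) (i : ι) : pd k (fun y => f y i) = fun y => pd k f y i := by
  funext y
  simp [pd, fderiv_apply (hf y) i]

theorem pdIter_apply {ι : Type*} [Fintype ι] {f : E3 → ι → F} (hf : ContDiff ℝ ∞ f)
    (σ : ℕ → Fin 3) (n : ℕ) (i : ι) :
    pdIter σ n (fun y => f y i) = fun y => pdIter σ n f y i := by
  induction n with
  | zero => rfl
  | succ n ih =>
    rw [pdIter, pdIter, ih, pd_apply ((hf.pdIter σ n).differentiable (by simp))]

variable {f g : E3 → ℝ} (k : Fin 3)

theorem pd_add (hf : Differentiable ℝ f) (hg : Differentiable ℝ g) :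
    pd k (fun y => f y + g y) = fun y => pd k f y + pd k g y := by
  funext y
  simp [pd, fderiv_fun_add (hf y) (hg y)]

theorem pd_mul (hf : Differentiable ℝ f) (hg : Differentiable ℝ g) :
    pd k (fun y => f y * g y) = fun y => pd k f y * g y + f y * pd k g y := by
  funext y
  simp only [pd, fderiv_fun_mul (hf y) (hg y), add_apply, smul_apply, smul_eq_mul]
  ring

theorem pd_const_mul (hf : Differentiable ℝ f) (c : ℝ) :
    pd k (fun y => c * f y) = fun y => c * pd k f y := by
  funext y
  simp [pd, fderiv_const_mul (hf y)]

theorem pd_sum {ι : Type*} (s : Finset ι) {f : ι → E3 → ℝ} (hf : ∀ i, Differentiable ℝ (f i)) :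
    pd k (fun y => ∑ i ∈ s, f i y) = fun y => ∑ i ∈ s, pd k (f i) y := by
  funext y
  simp [pd, fderiv_fun_sum fun i _ => hf i y]

theorem pd_comp {φ : ℝ → ℝ} (hφ : Differentiable ℝ φ) (hf : Differentiable ℝ f) :
    pd k (fun y => φ (f y)) = fun y => deriv φ (f y) * pd k f y := by
  funext y
  simp [pd, fderiv_fun_comp y (hφ _) (hf y), fderiv_eq_smul_deriv, mul_comm]

end PartialDerivatives

section FrobeniusProduct

theorem mdot_comm (A B : Mat3) : mdot A B = mdot B A := by
  simp only [mdot, mul_comm]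

@[fun_prop]
theorem Differentiable.mdot {A B : E3 → Mat3} (hA : Differentiable ℝ A)
    (hB : Differentiable ℝ B) : Differentiable ℝ (fun y => mdot (A y) (B y)) := by
  unfold _root_.mdot
  fun_prop

@[fun_prop]
theorem ContDiff.msq {n : WithTop ℕ∞} {A : E3 → Mat3} (hA : ContDiff ℝ n A) :
    ContDiff ℝ n (fun y => msq (A y)) := by
  unfold _root_.msq _root_.mdot
  fun_prop

variable {A B : E3 → Mat3} (k : Fin 3)

theorem pd_apply_apply (hA : Differentiable ℝ A) (i j : Fin 3) :
    pd k (fun y => A y i j) = fun y => pd k A y i j := by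
  rw [pd_apply (differentiable_pi.1 hA i), pd_apply hA]

theorem pd_mdot (hA : Differentiable ℝ A) (hB : Differentiable ℝ B) :
    pd k (fun y => mdot (A y) (B y)) = fun y => mdot (pd k A y) (B y) + mdot (A y) (pd k B y) := by
  funext y
  simp (disch := fun_prop) only [mdot, pd_sum, pd_mul, pd_apply_apply, ← Finset.sum_add_distrib]

theorem pd_msq (hA : Differentiable ℝ A) :
    pd k (fun y => msq (A y)) = fun y => 2 * mdot (A y) (pd k A y) := by
  change pd k (fun y => mdot (A y) (A y)) = _
  rw [pd_mdot k hA hA]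
  funext y
  rw [mdot_comm (pd k A y)]
  ring

end FrobeniusProduct

section ChainRule

variable {φ : ℝ → ℝ} {f : E3 → ℝ} (hφ : ContDiff ℝ ∞ φ) (hf : ContDiff ℝ ∞ f) (a b c : Fin 3)
include hφ hf

theorem pd_pd_comp :
    pd b (pd a (fun y => φ (f y))) = fun y =>
      deriv (deriv φ) (f y) * pd b f y * pd a f y + deriv φ (f y) * pd b (pd a f) y := by
  have hφ' : ContDiff ℝ ∞ (deriv φ) := (contDiff_infty_iff_deriv.1 hφ).2
  simp (disch := fun_prop (disch := simp)) only [pd_comp, pd_mul]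

theorem pd_pd_pd_comp :
    pd c (pd b (pd a (fun y => φ (f y)))) = fun y =>
      deriv (deriv (deriv φ)) (f y) * pd c f y * pd b f y * pd a f y
        + deriv (deriv φ) (f y) *
            (pd c (pd b f) y * pd a f y + pd b f y * pd c (pd a f) y + pd c f y * pd b (pd a f) y)
        + deriv φ (f y) * pd c (pd b (pd a f)) y := by
  have hφ' : ContDiff ℝ ∞ (deriv φ) := (contDiff_infty_iff_deriv.1 hφ).2
  have hφ'' : ContDiff ℝ ∞ (deriv (deriv φ)) := (contDiff_infty_iff_deriv.1 hφ').2
  rw [pd_pd_comp hφ hf]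
  simp (disch := fun_prop (disch := simp)) only [pd_comp, pd_mul, pd_add]
  funext y
  ring

end ChainRule

section SquaredNorm

variable {D : E3 → Mat3} (hD : ContDiff ℝ ∞ D) (a b c : Fin 3)
include hD

theorem pd_pd_msq :
    pd b (pd a (fun y => msq (D y))) = fun y =>
      2 * (mdot (pd b D y) (pd a D y) + mdot (D y) (pd b (pd a D) y)) := by
  simp (disch := fun_prop (disch := simp)) only [pd_msq, pd_const_mul, pd_mdot]

theorem pd_pd_pd_msq :
    pd c (pd b (pd a (fun y => msq (D y)))) = fun y =>
      2 * (mdot (pd c (pd b D) y) (pd a D y) + mdot (pd b D y) (pd c (pd a D) y)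
        + (mdot (pd c D y) (pd b (pd a D) y) + mdot (D y) (pd c (pd b (pd a D)) y))) := by
  rw [pd_pd_msq hD]
  simp (disch := fun_prop (disch := simp)) only [pd_const_mul, pd_add, pd_mdot]

end SquaredNorm

theorem ContDiff.symGrad {u : E3 → E3} (hu : ContDiff ℝ ∞ u) : ContDiff ℝ ∞ (symGrad u) := by
  unfold _root_.symGrad
  fun_prop

section ErrorTerm

variable {G : ℝ → ℝ} {u : E3 → E3} (hG : ContDiff ℝ ∞ G) (hu : ContDiff ℝ ∞ u)
  (σ : ℕ → Fin 3) (x : E3)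
include hu

local notation "𝔻" => symGrad u
local notation "q" => fun y => msq (symGrad u y)

theorem Eerr_eq (n : ℕ) :
    Eerr G u σ n x = pdIter σ n (fun y => G (msq (𝔻 y))) x
      - 2 * deriv G (msq (𝔻 x)) * mdot (𝔻 x) (pdIter σ n 𝔻 x) := by
  have hD := hu.symGrad
  simp only [Eerr, pdIter_apply (contDiff_pi.1 hD _), pdIter_apply hD]

include hG

theorem Eerr_two_eq :
    Eerr G u σ 2 x =
      deriv (deriv G) (msq (𝔻 x)) * pd (σ 2) q x * pd (σ 1) q x
        + 2 * deriv G (msq (𝔻 x)) * mdot (pd (σ 2) 𝔻 x) (pd (σ 1) 𝔻 x) := by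
  simp only [Eerr_eq hu, pdIter]
  rw [pd_pd_comp hG hu.symGrad.msq, pd_pd_msq hu.symGrad]
  ring

theorem Eerr_three_eq :
    Eerr G u σ 3 x =
      deriv (deriv (deriv G)) (msq (𝔻 x)) * pd (σ 3) q x * pd (σ 2) q x * pd (σ 1) q x
        + deriv (deriv G) (msq (𝔻 x)) *
          (pd (σ 3) (pd (σ 2) q) x * pd (σ 1) q x + pd (σ 2) q x * pd (σ 3) (pd (σ 1) q) x
            + pd (σ 3) q x * pd (σ 2) (pd (σ 1) q) x)
        + 2 * deriv G (msq (𝔻 x)) *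
          (mdot (pd (σ 3) (pd (σ 2) 𝔻) x) (pd (σ 1) 𝔻 x)
            + mdot (pd (σ 3) (pd (σ 1) 𝔻) x) (pd (σ 2) 𝔻 x)
            + mdot (pd (σ 2) (pd (σ 1) 𝔻) x) (pd (σ 3) 𝔻 x)) := by
  simp only [Eerr_eq hu, pdIter]
  rw [pd_pd_pd_comp hG hu.symGrad.msq, pd_pd_pd_msq hu.symGrad,
    mdot_comm (pd (σ 3) (pd (σ 1) 𝔻) x), mdot_comm (pd (σ 2) (pd (σ 1) 𝔻) x)]
  ring

end ErrorTerm

section Norms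

variable {F : Type*} [NormedAddCommGroup F] [NormedSpace ℝ F]

theorem norm_pd_le (i : Fin 3) (f : E3 → F) (x : E3) :
    ‖pd i f x‖ ≤ ‖iteratedFDeriv ℝ 1 f x‖ := by
  rw [norm_iteratedFDeriv_one]
  calc ‖fderiv ℝ f x (Pi.single i 1)‖ ≤ ‖fderiv ℝ f x‖ * ‖(Pi.single i 1 : E3)‖ :=
        (fderiv ℝ f x).le_opNorm _
    _ = ‖fderiv ℝ f x‖ := by rw [Pi.norm_single, norm_one, mul_one]

theorem norm_pd_pd_le {f : E3 → F} (hf : ContDiff ℝ 2 f) (i j : Fin 3) (x : E3) :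
    ‖pd j (pd i f) x‖ ≤ ‖iteratedFDeriv ℝ 2 f x‖ := by
  have hdf : DifferentiableAt ℝ (fderiv ℝ f) x :=
    (hf.fderiv_right (m := 1) le_rfl).differentiable one_ne_zero x
  have h : pd j (pd i f) x = iteratedFDeriv ℝ 2 f x ![Pi.single j 1, Pi.single i 1] := by
    rw [iteratedFDeriv_two_apply]
    change fderiv ℝ (fun y => fderiv ℝ f y (Pi.single i 1)) x (Pi.single j 1) = _
    simp [fderiv_clm_apply hdf (differentiableAt_const _)]
  rw [h]
  calc _ ≤ ‖iteratedFDeriv ℝ 2 f x‖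
          * ∏ k, ‖(![Pi.single j 1, Pi.single i 1] : Fin 2 → E3) k‖ :=
        ContinuousMultilinearMap.le_opNorm _ _
    _ = _ := by simp [Fin.prod_univ_two, Pi.norm_single]

theorem abs_apply_apply_le_norm (A : Mat3) (i j : Fin 3) : |A i j| ≤ ‖A‖ :=
  (norm_le_pi_norm (A i) j).trans (norm_le_pi_norm A i)

theorem abs_mdot_le (A B : Mat3) : |mdot A B| ≤ 9 * (‖A‖ * ‖B‖) := by
  calc |mdot A B| ≤ ∑ i, ∑ j, |A i j * B i j| :=
        (Finset.abs_sum_le_sum_abs _ _).trans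
          (Finset.sum_le_sum fun i _ => Finset.abs_sum_le_sum_abs _ _)
    _ ≤ ∑ _i : Fin 3, ∑ _j : Fin 3, ‖A‖ * ‖B‖ := by
        gcongr with i _ j _
        rw [abs_mul]
        exact mul_le_mul (abs_apply_apply_le_norm A i j) (abs_apply_apply_le_norm B i j)
          (abs_nonneg _) (norm_nonneg _)
    _ = 9 * (‖A‖ * ‖B‖) := by simp; ring

theorem sq_norm_le_msq (A : Mat3) : ‖A‖ ^ 2 ≤ msq A := by
  have hsq : ∀ i j, A i j ^ 2 ≤ msq A := fun i j =>
    calc A i j ^ 2 ≤ ∑ j', A i j' * A i j' :=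
          (sq (A i j)).le.trans (Finset.single_le_sum (fun j' _ => mul_self_nonneg (A i j'))
            (Finset.mem_univ j))
      _ ≤ msq A := Finset.single_le_sum (f := fun i => ∑ j', A i j' * A i j')
          (fun i' _ => Finset.sum_nonneg fun j' _ => mul_self_nonneg (A i' j')) (Finset.mem_univ i)
  have hnorm : ‖A‖ ≤ √(msq A) :=
    (pi_norm_le_iff_of_nonneg (Real.sqrt_nonneg _)).2 fun i =>
      (pi_norm_le_iff_of_nonneg (Real.sqrt_nonneg _)).2 fun j =>
        (Real.norm_eq_abs _).trans_le (Real.abs_le_sqrt (hsq i j))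
  calc ‖A‖ ^ 2 ≤ √(msq A) ^ 2 := pow_le_pow_left₀ (norm_nonneg A) hnorm 2
    _ = msq A := Real.sq_sqrt ((sq_nonneg _).trans (hsq 0 0))

end Norms

section DerivativeBounds

variable {D : E3 → Mat3} (x : E3) {g κ : ℝ}

local notation "q" => fun y => msq (D y)
local notation "N₁" => ‖iteratedFDeriv ℝ 1 D x‖
local notation "N₂" => ‖iteratedFDeriv ℝ 2 D x‖

theorem abs_mdot_pd_pd_le (k l : Fin 3) : |mdot (pd k D x) (pd l D x)| ≤ 9 * (N₁ * N₁) :=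
  (abs_mdot_le _ _).trans (by gcongr <;> exact norm_pd_le _ _ _)

theorem abs_mdot_pd_pd_pd_le (hD : ContDiff ℝ 2 D) (k l m : Fin 3) :
    |mdot (pd l (pd k D) x) (pd m D x)| ≤ 9 * (N₂ * N₁) :=
  (abs_mdot_le _ _).trans (by gcongr; exacts [norm_pd_pd_le hD k l x, norm_pd_le m _ x])

theorem abs_pd_msq_le (hD : Differentiable ℝ D) (k : Fin 3) :
    |pd k q x| ≤ 18 * (‖D x‖ * N₁) := by
  rw [pd_msq k hD, abs_mul, abs_two]
  calc 2 * |mdot (D x) (pd k D x)| ≤ 2 * (9 * (‖D x‖ * ‖pd k D x‖)) := by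
        gcongr; exact abs_mdot_le _ _
    _ ≤ 2 * (9 * (‖D x‖ * N₁)) := by gcongr; exact norm_pd_le k D x
    _ = _ := by ring

theorem abs_pd_pd_msq_le (hD : ContDiff ℝ ∞ D) (k l : Fin 3) :
    |pd l (pd k q) x| ≤ 18 * (N₁ ^ 2 + ‖D x‖ * N₂) := by
  rw [pd_pd_msq hD, abs_mul, abs_two]
  calc 2 * |mdot (pd l D x) (pd k D x) + mdot (D x) (pd l (pd k D) x)|
      ≤ 2 * (9 * (N₁ * N₁) + 9 * (‖D x‖ * ‖pd l (pd k D) x‖)) := by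
        gcongr
        exact (abs_add_le _ _).trans (add_le_add (abs_mdot_pd_pd_le x l k) (abs_mdot_le _ _))
    _ ≤ 2 * (9 * (N₁ * N₁) + 9 * (‖D x‖ * N₂)) := by
        gcongr; exact norm_pd_pd_le (hD.of_le (by norm_cast)) k l x
    _ = _ := by ring

theorem abs_mul_pd_msq_mul_pd_msq_le (hD : Differentiable ℝ D) (hg : |g| * ‖D x‖ ^ 2 ≤ κ)
    (a b : Fin 3) : |g * pd b q x * pd a q x| ≤ 324 * κ * N₁ ^ 2 := by
  simp only [abs_mul]
  calc _ ≤ |g| * (18 * (‖D x‖ * N₁)) * (18 * (‖D x‖ * N₁)) := by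
        gcongr <;> exact abs_pd_msq_le x hD _
    _ = 324 * (|g| * ‖D x‖ ^ 2) * N₁ ^ 2 := by ring
    _ ≤ 324 * κ * N₁ ^ 2 := by gcongr

theorem abs_mul_pd_msq_mul_pd_msq_mul_pd_msq_le (hD : Differentiable ℝ D)
    (hg : |g| * ‖D x‖ ^ 3 ≤ κ) (a b c : Fin 3) :
    |g * pd c q x * pd b q x * pd a q x| ≤ 5832 * κ * N₁ ^ 3 := by
  simp only [abs_mul]
  calc _ ≤ |g| * (18 * (‖D x‖ * N₁)) * (18 * (‖D x‖ * N₁)) * (18 * (‖D x‖ * N₁)) := by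
        gcongr <;> exact abs_pd_msq_le x hD _
    _ = 5832 * (|g| * ‖D x‖ ^ 3) * N₁ ^ 3 := by ring
    _ ≤ 5832 * κ * N₁ ^ 3 := by gcongr

theorem abs_mul_sum_pd_pd_msq_mul_pd_msq_le (hD : ContDiff ℝ ∞ D) (hg₁ : |g| * ‖D x‖ ≤ κ)
    (hg₂ : |g| * ‖D x‖ ^ 2 ≤ κ) (a b c : Fin 3) :
    |g * (pd c (pd b q) x * pd a q x + pd b q x * pd c (pd a q) x + pd c q x * pd b (pd a q) x)|
      ≤ 972 * κ * (N₁ ^ 3 + N₂ * N₁) := by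
  have hP := abs_pd_msq_le x (hD.differentiable (by simp))
  have hQ := abs_pd_pd_msq_le x hD
  rw [abs_mul]
  calc _ ≤ |g| * (18 * (N₁ ^ 2 + ‖D x‖ * N₂) * (18 * (‖D x‖ * N₁))
          + 18 * (‖D x‖ * N₁) * (18 * (N₁ ^ 2 + ‖D x‖ * N₂))
          + 18 * (‖D x‖ * N₁) * (18 * (N₁ ^ 2 + ‖D x‖ * N₂))) := by
        gcongr
        refine (abs_add_three _ _ _).trans ?_
        simp only [abs_mul]
        gcongr <;> apply_rules
    _ = 972 * (|g| * ‖D x‖) * N₁ ^ 3 + 972 * (|g| * ‖D x‖ ^ 2) * (N₂ * N₁) := by ring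
    _ ≤ 972 * κ * N₁ ^ 3 + 972 * κ * (N₂ * N₁) := by gcongr
    _ = _ := by ring

end DerivativeBounds

def derivConst (C : ℕ → ℝ) (k : ℕ) : ℝ := ∏ i ∈ Finset.range k, 2 * |C (i + 1)|

theorem derivConst_nonneg (C : ℕ → ℝ) (k : ℕ) : 0 ≤ derivConst C k :=
  Finset.prod_nonneg fun _ _ => by positivity

namespace GoodG

variable {G : ℝ → ℝ} {m₀ : ℝ} {C : ℕ → ℝ} (hG : GoodG G m₀ C)
include hG

theorem pos {s : ℝ} (hs : 0 ≤ s) : 0 < G s := hG.m₀_pos.trans_le (hG.lower s hs)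

theorem abs_iteratedDeriv_mul_one_add_pow_le {s : ℝ} (hs : 0 ≤ s) (k : ℕ) :
    |iteratedDeriv k G s| * (1 + s) ^ k ≤ derivConst C k * G s := by
  induction k with
  | zero => simp [derivConst, abs_of_pos (hG.pos hs)]
  | succ k ih =>
    have h0 := hG.deriv_bound (k + 1) (by omega) s hs 0 (by omega)
    have h1 := hG.deriv_bound (k + 1) (by omega) s hs 1 le_rfl
    simp only [pow_zero, mul_one, pow_one, Nat.add_sub_cancel, abs_mul, abs_of_nonneg hs] at h0 h1
    have hC := mul_le_mul_of_nonneg_right (le_abs_self (C (k + 1)))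
      (abs_nonneg (iteratedDeriv k G s))
    have step : |iteratedDeriv (k + 1) G s| * (1 + s)
        ≤ 2 * |C (k + 1)| * |iteratedDeriv k G s| := by linarith
    calc |iteratedDeriv (k + 1) G s| * (1 + s) ^ (k + 1)
        = |iteratedDeriv (k + 1) G s| * (1 + s) * (1 + s) ^ k := by ring
      _ ≤ 2 * |C (k + 1)| * |iteratedDeriv k G s| * (1 + s) ^ k := by gcongr
      _ = 2 * |C (k + 1)| * (|iteratedDeriv k G s| * (1 + s) ^ k) := by ring
      _ ≤ 2 * |C (k + 1)| * (derivConst C k * G s) := by gcongr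
      _ = derivConst C (k + 1) * G s := by
        simp only [derivConst, Finset.prod_range_succ]; ring

theorem abs_iteratedDeriv_mul_pow_le {n k j : ℕ} (hkn : k ≤ n) (hjk : j ≤ k) {s t : ℝ}
    (ht : 0 ≤ t) (hts : t ^ 2 ≤ s) :
    |iteratedDeriv k G s| * t ^ j ≤ (∑ i ∈ Finset.range (n + 1), derivConst C i) * G s := by
  have hs : 0 ≤ s := (sq_nonneg t).trans hts
  have ht1 : t ≤ 1 + s := by nlinarith
  have hpow : t ^ j ≤ (1 + s) ^ k :=
    (pow_le_pow_left₀ ht ht1 j).trans (pow_le_pow_right₀ (by linarith) hjk)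
  have hk : derivConst C k ≤ ∑ i ∈ Finset.range (n + 1), derivConst C i :=
    Finset.single_le_sum (fun i _ => derivConst_nonneg C i) (Finset.mem_range.2 (by omega))
  calc |iteratedDeriv k G s| * t ^ j ≤ |iteratedDeriv k G s| * (1 + s) ^ k := by gcongr
    _ ≤ derivConst C k * G s := hG.abs_iteratedDeriv_mul_one_add_pow_le hs k
    _ ≤ _ := by gcongr; exact (hG.pos hs).le

end GoodG

section ErrorBounds

variable {G : ℝ → ℝ} {u : E3 → E3} {K : ℝ} (hG : ContDiff ℝ ∞ G) (hu : ContDiff ℝ ∞ u)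
  (σ : ℕ → Fin 3) (x : E3)
include hG hu

local notation "𝔻" => symGrad u
local notation "N₁" => ‖iteratedFDeriv ℝ 1 (symGrad u) x‖
local notation "N₂" => ‖iteratedFDeriv ℝ 2 (symGrad u) x‖

theorem abs_Eerr_two_le
    (hK : ∀ k ≤ 2, ∀ j ≤ k, |iteratedDeriv k G (msq (𝔻 x))| * ‖𝔻 x‖ ^ j ≤ K * G (msq (𝔻 x))) :
    |Eerr G u σ 2 x| ≤ 342 * K * G (msq (𝔻 x)) * N₁ ^ 2 := by
  have h1 : |deriv G (msq (𝔻 x))| ≤ K * G (msq (𝔻 x)) := by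
    simpa using hK 1 (by norm_num) 0 (by norm_num)
  have h2 : |deriv (deriv G) (msq (𝔻 x))| * ‖𝔻 x‖ ^ 2 ≤ K * G (msq (𝔻 x)) := by
    simpa [iteratedDeriv_succ] using hK 2 le_rfl 2 le_rfl
  have hκ : 0 ≤ K * G (msq (𝔻 x)) := (abs_nonneg _).trans h1
  have hT2 := abs_mul_pd_msq_mul_pd_msq_le x (hu.symGrad.differentiable (by simp)) h2 (σ 1) (σ 2)
  have hT1 : |2 * deriv G (msq (𝔻 x)) * mdot (pd (σ 2) 𝔻 x) (pd (σ 1) 𝔻 x)|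
      ≤ 18 * (K * G (msq (𝔻 x))) * N₁ ^ 2 := by
    rw [abs_mul, abs_mul, abs_two]
    calc _ ≤ 2 * (K * G (msq (𝔻 x))) * (9 * (N₁ * N₁)) :=
          mul_le_mul (by linarith) (abs_mdot_pd_pd_le x _ _) (abs_nonneg _) (by linarith)
      _ = _ := by ring
  rw [Eerr_two_eq hG hu]
  exact (abs_add_le _ _).trans (by linarith)

theorem abs_Eerr_three_le
    (hK : ∀ k ≤ 3, ∀ j ≤ k, |iteratedDeriv k G (msq (𝔻 x))| * ‖𝔻 x‖ ^ j ≤ K * G (msq (𝔻 x))) :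
    |Eerr G u σ 3 x| ≤ 6804 * K * G (msq (𝔻 x)) * (N₁ ^ 3 + N₂ * N₁) := by
  have hD := hu.symGrad
  have h1 : |deriv G (msq (𝔻 x))| ≤ K * G (msq (𝔻 x)) := by
    simpa using hK 1 (by norm_num) 0 (by norm_num)
  have h21 : |deriv (deriv G) (msq (𝔻 x))| * ‖𝔻 x‖ ≤ K * G (msq (𝔻 x)) := by
    simpa [iteratedDeriv_succ] using hK 2 (by norm_num) 1 (by norm_num)
  have h22 : |deriv (deriv G) (msq (𝔻 x))| * ‖𝔻 x‖ ^ 2 ≤ K * G (msq (𝔻 x)) := by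
    simpa [iteratedDeriv_succ] using hK 2 (by norm_num) 2 le_rfl
  have h3 : |deriv (deriv (deriv G)) (msq (𝔻 x))| * ‖𝔻 x‖ ^ 3 ≤ K * G (msq (𝔻 x)) := by
    simpa [iteratedDeriv_succ] using hK 3 le_rfl 3 le_rfl
  have hκ : 0 ≤ K * G (msq (𝔻 x)) := (abs_nonneg _).trans h1
  have hT3 := abs_mul_pd_msq_mul_pd_msq_mul_pd_msq_le x (hD.differentiable (by simp)) h3
    (σ 1) (σ 2) (σ 3)
  have hT2 := abs_mul_sum_pd_pd_msq_mul_pd_msq_le x hD h21 h22 (σ 1) (σ 2) (σ 3)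
  have hV := abs_mdot_pd_pd_pd_le x (hD.of_le (by norm_cast))
  have hT1 : |2 * deriv G (msq (𝔻 x)) *
      (mdot (pd (σ 3) (pd (σ 2) 𝔻) x) (pd (σ 1) 𝔻 x)
        + mdot (pd (σ 3) (pd (σ 1) 𝔻) x) (pd (σ 2) 𝔻 x)
        + mdot (pd (σ 2) (pd (σ 1) 𝔻) x) (pd (σ 3) 𝔻 x))|
      ≤ 54 * (K * G (msq (𝔻 x))) * (N₂ * N₁) := by
    rw [abs_mul, abs_mul, abs_two]
    calc _ ≤ 2 * (K * G (msq (𝔻 x))) * (9 * (N₂ * N₁) + 9 * (N₂ * N₁) + 9 * (N₂ * N₁)) :=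
          mul_le_mul (by linarith)
            ((abs_add_three _ _ _).trans (add_le_add_three (hV _ _ _) (hV _ _ _) (hV _ _ _)))
            (abs_nonneg _) (by linarith)
      _ = _ := by ring
  have hκN : 0 ≤ K * G (msq (𝔻 x)) * (N₂ * N₁) := mul_nonneg hκ (by positivity)
  rw [Eerr_three_eq hG hu]
  exact (abs_add_three _ _ _).trans (by linarith)

end ErrorBounds

open MeasureTheory Set ENNReal in
theorem Eerr_two_three_pointwise_bound_general
    (G : ℝ → ℝ) (m₀ : ℝ) (C : ℕ → ℝ) (hG : GoodG G m₀ C)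
    (u : E3 → E3) (hu : ContDiff ℝ (⊤ : ℕ∞) u) :
    ∃ C' : ℝ, 0 < C' ∧
      ∀ σ : ℕ → Fin 3, ∀ x : E3,
        |Eerr G u σ 2 x|
            ≤ C' * G (msq (symGrad u x)) * ‖iteratedFDeriv ℝ 1 (symGrad u) x‖ ^ 2 ∧
        |Eerr G u σ 3 x|
            ≤ C' * G (msq (symGrad u x)) *
                (‖iteratedFDeriv ℝ 1 (symGrad u) x‖ ^ 3
                  + ‖iteratedFDeriv ℝ 2 (symGrad u) x‖
                      * ‖iteratedFDeriv ℝ 1 (symGrad u) x‖) := by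
  set K := ∑ i ∈ Finset.range 4, derivConst C i
  have hK : 0 < K :=
    Finset.sum_pos' (fun i _ => derivConst_nonneg C i) ⟨0, by simp, by simp [derivConst]⟩
  refine ⟨6804 * K, by positivity, fun σ x => ?_⟩
  have hGK : ∀ k ≤ 3, ∀ j ≤ k, |iteratedDeriv k G (msq (symGrad u x))| * ‖symGrad u x‖ ^ j
      ≤ K * G (msq (symGrad u x)) := fun k hk j hj =>
    hG.abs_iteratedDeriv_mul_pow_le hk hj (norm_nonneg _) (sq_norm_le_msq _)
  have hG0 : 0 ≤ G (msq (symGrad u x)) := (hG.pos ((sq_nonneg _).trans (sq_norm_le_msq _))).le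
  refine ⟨?_, abs_Eerr_three_le hG.smooth hu σ x hGK⟩
  calc _ ≤ 342 * K * G (msq (symGrad u x)) * ‖iteratedFDeriv ℝ 1 (symGrad u) x‖ ^ 2 :=
        abs_Eerr_two_le hG.smooth hu σ x fun k hk j hj => hGK k (by omega) j hj
    _ ≤ _ := by gcongr; norm_num

open MeasureTheory Set ENNReal in
/-- Lemma `deriv-G`, part (1): pointwise bounds
`|E₂| ≤ C G[|Du|²] |∇Du|²` and `|E₃| ≤ C G[|Du|²](|∇Du|³ + |∇²Du||∇Du|)`,
with `C` depending only on the structural constants of `G`. -/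
theorem Eerr_two_three_pointwise_bound
    (G : ℝ → ℝ) (m₀ : ℝ) (C : ℕ → ℝ) (hG : GoodG G m₀ C)
    (l : ℕ) (u : E3 → E3) (hu : ContDiff ℝ (⊤ : ℕ∞) u) (huH : HNorm l u < ⊤) :
    ∃ C' : ℝ, 0 < C' ∧
      ∀ σ : ℕ → Fin 3, ∀ x : E3,
        |Eerr G u σ 2 x|
            ≤ C' * G (msq (symGrad u x)) * ‖iteratedFDeriv ℝ 1 (symGrad u) x‖ ^ 2 ∧
        |Eerr G u σ 3 x|
            ≤ C' * G (msq (symGrad u x)) *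
                (‖iteratedFDeriv ℝ 1 (symGrad u) x‖ ^ 3
                  + ‖iteratedFDeriv ℝ 2 (symGrad u) x‖
                      * ‖iteratedFDeriv ℝ 1 (symGrad u) x‖) :=
  Eerr_two_three_pointwise_bound_general G m₀ C hG u hu
end

section
/- Let v, w ∈ W^{1,2}(ℝ³;ℝ³) and let G:[0,∞)→[0,∞) be differentiable with G[s] ≥ m₀ and G[s] + 2G'[s]s ≥ m₀ for all s ≥ 0, where m₀ > 0. Then m₀ ‖Dv − Dw‖²_{L²(ℝ³)} ≤ ∫_{ℝ³} ( G[|Dv|²] Dv − G[|Dw|²] Dw ) : (Dv − Dw) dx. -/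
open MeasureTheory Set ENNReal

/-! The inequality holds pointwise, for any two matrices `A`, `B`, and is then integrated. Along
the segment `C t = B + t (A - B)` the function `t ↦ G[|C t|²] C t : (A - B)` has derivative
`2 G'[|C t|²] (C t : (A - B))² + G[|C t|²] |A - B|²`. When `G' ≥ 0` this is at least
`G |A - B|² ≥ m₀ |A - B|²`; when `G' < 0`, Cauchy–Schwarz bounds it below by
`(G + 2 G' |C t|²) |A - B|² ≥ m₀ |A - B|²`. The mean value theorem on `[0, 1]` concludes. -/

open scoped RealInnerProductSpace

lemma mul_le_two_mul_mul_sq_add_mul {m g g' q p d : ℝ} (hd : 0 ≤ d) (hp : p ^ 2 ≤ q * d)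
    (hg : m ≤ g) (hg' : m ≤ g + 2 * g' * q) : m * d ≤ 2 * g' * p ^ 2 + g * d := by
  rcases le_or_gt 0 g' with hpos | hneg
  · nlinarith [sq_nonneg p]
  · nlinarith

theorem mul_norm_sub_sq_le_inner_smul_sub_smul {F : Type*} [NormedAddCommGroup F]
    [InnerProductSpace ℝ F] {G : ℝ → ℝ} {m₀ : ℝ} (hG : Differentiable ℝ G)
    (hG1 : ∀ s, 0 ≤ s → m₀ ≤ G s) (hG2 : ∀ s, 0 ≤ s → m₀ ≤ G s + 2 * deriv G s * s) (a b : F) :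
    m₀ * ‖a - b‖ ^ 2 ≤ ⟪G (‖a‖ ^ 2) • a - G (‖b‖ ^ 2) • b, a - b⟫ := by
  set d := a - b
  let c : ℝ → F := fun t => b + t • d
  have hc : ∀ t, HasDerivAt c d t := fun t => by
    simpa [c] using ((hasDerivAt_id t).smul_const d).const_add b
  have hpair : ∀ t, HasDerivAt (fun t => ⟪c t, d⟫) (‖d‖ ^ 2) t := fun t => by
    simpa [real_inner_self_eq_norm_sq] using (hc t).inner ℝ (hasDerivAt_const t d)
  let h : ℝ → ℝ := fun t => G (‖c t‖ ^ 2) * ⟪c t, d⟫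
  have hh : ∀ t, HasDerivAt h
      (deriv G (‖c t‖ ^ 2) * (2 * ⟪c t, d⟫) * ⟪c t, d⟫ + G (‖c t‖ ^ 2) * ‖d‖ ^ 2) t :=
    fun t => ((hG _).hasDerivAt.comp t (hc t).norm_sq).mul (hpair t)
  have hderiv : ∀ t, m₀ * ‖d‖ ^ 2 ≤ deriv h t := fun t => by
    have hcs : ⟪c t, d⟫ ^ 2 ≤ ‖c t‖ ^ 2 * ‖d‖ ^ 2 := by
      rw [sq, ← real_inner_self_eq_norm_sq, ← real_inner_self_eq_norm_sq]
      exact real_inner_mul_inner_self_le _ _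
    rw [(hh t).deriv]
    have := mul_le_two_mul_mul_sq_add_mul (sq_nonneg ‖d‖) hcs (hG1 _ (sq_nonneg _))
      (hG2 _ (sq_nonneg _))
    linarith
  have hc0 : c 0 = b := by simp [c]
  have hc1 : c 1 = a := by simp [c, d]
  have := mul_sub_le_image_sub_of_le_deriv (fun t => (hh t).differentiableAt) hderiv zero_le_one
  simpa [h, hc0, hc1, inner_sub_left, inner_smul_left] using this

def Mat3.toEuclidean : Mat3 →ₗ[ℝ] EuclideanSpace ℝ (Fin 3 × Fin 3) :=
  (WithLp.linearEquiv 2 ℝ _).symm.toLinearMap ∘ₗ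
    (LinearEquiv.curry ℝ ℝ (Fin 3) (Fin 3)).symm.toLinearMap

lemma mdot_eq_inner (A B : Mat3) : mdot A B = ⟪Mat3.toEuclidean A, Mat3.toEuclidean B⟫ := by
  simp [mdot, Mat3.toEuclidean, PiLp.inner_apply, Fintype.sum_prod_type, mul_comm]

lemma msq_eq_norm_sq (A : Mat3) : msq A = ‖Mat3.toEuclidean A‖ ^ 2 := by
  rw [msq, mdot_eq_inner, real_inner_self_eq_norm_sq]

lemma mul_msq_sub_le_mdot_smul_sub_smul {G : ℝ → ℝ} {m₀ : ℝ} (hG : Differentiable ℝ G)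
    (hG1 : ∀ s, 0 ≤ s → m₀ ≤ G s) (hG2 : ∀ s, 0 ≤ s → m₀ ≤ G s + 2 * deriv G s * s)
    (A B : Mat3) :
    m₀ * msq (A - B) ≤ mdot (G (msq A) • A - G (msq B) • B) (A - B) := by
  simp only [mdot_eq_inner, msq_eq_norm_sq, map_sub, map_smul]
  exact mul_norm_sub_sq_le_inner_smul_sub_smul hG hG1 hG2 _ _

open MeasureTheory Set ENNReal in
theorem stress_monotonicity_general
    (G : ℝ → ℝ) (m₀ : ℝ)
    (hGdiff : Differentiable ℝ G)
    (hG1 : ∀ s : ℝ, 0 ≤ s → m₀ ≤ G s)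
    (hG2 : ∀ s : ℝ, 0 ≤ s → m₀ ≤ G s + 2 * deriv G s * s)
    (v w : E3 → E3) :
    ENNReal.ofReal m₀ * ∫⁻ x, ENNReal.ofReal (msq (symGrad v x - symGrad w x))
      ≤ ∫⁻ x, ENNReal.ofReal
          (mdot (stress G v x - stress G w x) (symGrad v x - symGrad w x)) := by
  rw [← lintegral_const_mul' _ _ ofReal_ne_top]
  refine lintegral_mono fun x => ?_
  have hmsq : 0 ≤ msq (symGrad v x - symGrad w x) := by
    rw [msq_eq_norm_sq]; positivity
  rw [← ENNReal.ofReal_mul' hmsq]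
  exact ENNReal.ofReal_le_ofReal
    (mul_msq_sub_le_mdot_smul_sub_smul hGdiff hG1 hG2 (symGrad v x) (symGrad w x))

open MeasureTheory Set ENNReal in
/-- Lemma `r-400`: monotonicity of the stress tensor, i.e.
`m₀‖Dv−Dw‖²_{L²} ≤ ∫ (G[|Dv|²]Dv − G[|Dw|²]Dw) : (Dv−Dw)` for
`v, w ∈ W^{1,2}(ℝ³)`. -/
theorem stress_monotonicity
    (G : ℝ → ℝ) (m₀ : ℝ) (hm : 0 < m₀)
    (hGdiff : Differentiable ℝ G)
    (hG1 : ∀ s : ℝ, 0 ≤ s → m₀ ≤ G s)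
    (hG2 : ∀ s : ℝ, 0 ≤ s → m₀ ≤ G s + 2 * deriv G s * s)
    (v w : E3 → E3)
    (hv : ContDiff ℝ 1 v) (hw : ContDiff ℝ 1 w)
    (hvH : HNorm 1 v < ⊤) (hwH : HNorm 1 w < ⊤) :
    ENNReal.ofReal m₀ * ∫⁻ x, ENNReal.ofReal (msq (symGrad v x - symGrad w x))
      ≤ ∫⁻ x, ENNReal.ofReal
          (mdot (stress G v x - stress G w x) (symGrad v x - symGrad w x)) :=
  stress_monotonicity_general G m₀ hGdiff hG1 hG2 v w
end

section
/- Let G:[0,∞)→[0,∞) be differentiable with G[s] ≥ m₀ and G[s] + 2G'[s]s ≥ m₀ for all s ≥ 0, where m₀ > 0. Then for any real 3×3 matrices A and B: G[|A|²] |B|² + 2 G'[|A|²] (A:B)² ≥ m₀ |B|². -/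
open MeasureTheory Set ENNReal

noncomputable section

lemma msq_nonneg (A : Mat3) : 0 ≤ msq A :=
  show 0 ≤ mdot A A from
    Finset.sum_nonneg fun i _ => Finset.sum_nonneg fun j _ => mul_self_nonneg (A i j)

lemma mdot_eq_sum_prod (A B : Mat3) :
    mdot A B = ∑ p : Fin 3 × Fin 3, A p.1 p.2 * B p.1 p.2 :=
  (Fintype.sum_prod_type fun p : Fin 3 × Fin 3 => A p.1 p.2 * B p.1 p.2).symm

lemma sq_mdot_le_msq_mul_msq (A B : Mat3) : mdot A B ^ 2 ≤ msq A * msq B := by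
  simpa only [msq, mdot_eq_sum_prod, ← sq] using
    Finset.sum_mul_sq_le_sq_mul_sq Finset.univ
      (fun p : Fin 3 × Fin 3 => A p.1 p.2) (fun p => B p.1 p.2)

/- The right-hand side is affine in `c ^ 2 ∈ [0, s * b]`, so it is bounded below by its
values `g * b` and `(g + 2 * d * s) * b` at the endpoints. -/
lemma mul_le_mul_add_two_mul_sq {m g d s b c : ℝ} (hb : 0 ≤ b) (hc : c ^ 2 ≤ s * b)
    (hg : m ≤ g) (hgd : m ≤ g + 2 * d * s) :
    m * b ≤ g * b + 2 * d * c ^ 2 := by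
  rcases le_or_gt 0 d with hd | hd
  · nlinarith [sq_nonneg c]
  · nlinarith

open MeasureTheory Set ENNReal in
theorem matrix_coercivity_general
    (G : ℝ → ℝ) (m₀ : ℝ)
    (hG1 : ∀ s : ℝ, 0 ≤ s → m₀ ≤ G s)
    (hG2 : ∀ s : ℝ, 0 ≤ s → m₀ ≤ G s + 2 * deriv G s * s)
    (A B : Mat3) :
    m₀ * msq B ≤ G (msq A) * msq B + 2 * deriv G (msq A) * (mdot A B) ^ 2 :=
  mul_le_mul_add_two_mul_sq (msq_nonneg B) (sq_mdot_le_msq_mul_msq A B)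
    (hG1 _ (msq_nonneg A)) (hG2 _ (msq_nonneg A))

open MeasureTheory Set ENNReal in
/-- inequality `eq-1 : G`: for any 3×3 matrices `A`, `B`,
`G[|A|²]|B|² + 2G'[|A|²](A:B)² ≥ m₀|B|²`. -/
theorem matrix_coercivity
    (G : ℝ → ℝ) (m₀ : ℝ) (hm : 0 < m₀)
    (hGdiff : Differentiable ℝ G)
    (hG1 : ∀ s : ℝ, 0 ≤ s → m₀ ≤ G s)
    (hG2 : ∀ s : ℝ, 0 ≤ s → m₀ ≤ G s + 2 * deriv G s * s)
    (A B : Mat3) :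
    m₀ * msq B ≤ G (msq A) * msq B + 2 * deriv G (msq A) * (mdot A B) ^ 2 :=
  matrix_coercivity_general G m₀ hG1 hG2 A B
end
end

section
/- Let α ∈ (0, 1/2] and T > 0. Suppose v : ℝ³ × [0,T] → ℝ satisfies v ∈ L^∞([0,T]; C^α(ℝ³)) (i.e., the spatial Hölder seminorm and sup norm of v(·,t) are bounded uniformly in t ∈ [0,T]) and its time derivative satisfies ∂_t v ∈ L^∞([0,T]; L²(ℝ³)). Then v ∈ C_x^α C_t^{α/2}(ℝ³ × [0,T]); in particular there is a constant C such that |v(x,t₁) − v(x,t₂)| ≤ C |t₁ − t₂|^{α/2} for all x ∈ ℝ³ and t₁, t₂ ∈ [0,T]. -/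
open MeasureTheory Set ENNReal

/-! For `t₁ < t₂` and a ball `B` of radius `r` around `x`, Tonelli, the fundamental theorem of
calculus and Cauchy–Schwarz give `∫_B |v t₂ - v t₁| ≤ K (t₂ - t₁) |B|^{1/2}`, so some `y ∈ B` has
`|v t₂ y - v t₁ y| ≤ K (t₂ - t₁) |B|^{-1/2}`. Moving from `x` to `y` at both times costs `2 M r^α`
by the spatial Hölder bound. In `ℝ³` the choice `r = (t₂ - t₁)^{1/2}` turns the two terms into
`(t₂ - t₁)^{α/2}` and `(t₂ - t₁)^{1/4}`, and `α ≤ 1/2` makes the second at most the first when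
`t₂ - t₁ ≤ 1`; larger time gaps are covered by the bound `|v| ≤ M`. -/

open Function Filter Topology

theorem continuous_uncurry_of_continuous_of_holder {X Y : Type*} [TopologicalSpace X]
    [PseudoMetricSpace Y] {f : X → Y → ℝ} {C a : ℝ} (ha : 0 < a)
    (hcont : ∀ y, Continuous (f · y)) (hholder : ∀ t y z, |f t y - f t z| ≤ C * dist y z ^ a) :
    Continuous (uncurry f) := by
  refine continuous_iff_continuousAt.2 fun ⟨t₀, y₀⟩ => ?_
  rw [ContinuousAt, tendsto_iff_dist_tendsto_zero]
  have hbound : Continuous fun p : X × Y => C * dist p.2 y₀ ^ a + dist (f p.1 y₀) (f t₀ y₀) :=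
    (continuous_const.mul ((continuous_snd.dist continuous_const).rpow_const
      fun _ => Or.inr ha.le)).add (((hcont y₀).comp continuous_fst).dist continuous_const)
  refine squeeze_zero (g := fun p : X × Y => C * dist p.2 y₀ ^ a + dist (f p.1 y₀) (f t₀ y₀))
    (fun _ => dist_nonneg) (fun p => ?_) ?_
  · exact (dist_triangle _ (f p.1 y₀) _).trans (add_le_add_left (hholder _ _ _) _)
  · simpa [Real.zero_rpow ha.ne'] using hbound.tendsto (t₀, y₀)

theorem enorm_sub_le_lintegral_enorm_deriv {E : Type*} [NormedAddCommGroup E] [NormedSpace ℝ E]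
    [CompleteSpace E] {f : ℝ → E} {a b : ℝ} (hab : a ≤ b) (hfc : ContinuousOn f (Icc a b))
    (hfd : DifferentiableOn ℝ f (Ioo a b)) :
    ‖f b - f a‖ₑ ≤ ∫⁻ t in Ioo a b, ‖deriv f t‖ₑ := by
  rw [setLIntegral_congr Ioo_ae_eq_Ioc]
  by_cases hfin : ∫⁻ t in Ioc a b, ‖deriv f t‖ₑ = ⊤
  · exact hfin ▸ le_top
  have hint : IntegrableOn (deriv f) (Ioc a b) :=
    ⟨aestronglyMeasurable_deriv f _, lt_top_iff_ne_top.2 hfin⟩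
  have hdisp := norm_sub_le_integral_of_norm_deriv_le_of_le hab hfc hfd
    (.of_forall fun _ _ => le_rfl)
    ((intervalIntegrable_iff_integrableOn_Ioc_of_le hab).2 hint.norm)
  rw [intervalIntegral.integral_of_le hab] at hdisp
  rw [← enorm_norm, Real.enorm_eq_ofReal (norm_nonneg _),
    ← ofReal_integral_norm_eq_lintegral_enorm hint]
  exact ENNReal.ofReal_le_ofReal hdisp

theorem lintegral_enorm_sub_le_of_eLpNorm_deriv_le {X : Type*} [TopologicalSpace X]
    [MeasurableSpace X] [OpensMeasurableSpace X] {μ : Measure X} [IsFiniteMeasure μ]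
    {f : ℝ → X → ℝ} {a b K : ℝ} (hab : a ≤ b) (hf : Continuous (uncurry f))
    (hfd : ∀ y, DifferentiableOn ℝ (f · y) (Ioo a b))
    (hK : ∀ t ∈ Ioo a b, eLpNorm (fun y => deriv (f · y) t) 2 μ ≤ ENNReal.ofReal K) :
    ∫⁻ y, ‖f b y - f a y‖ₑ ∂μ ≤
      ENNReal.ofReal K * μ univ ^ (1 / 2 : ℝ) * ENNReal.ofReal (b - a) := by
  have hmeas : Measurable fun p : X × ℝ => deriv (f · p.1) p.2 :=
    measurable_deriv_with_param (f := fun y t => f t y) (hf.comp continuous_swap)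
  have hslice : ∀ t ∈ Ioo a b,
      ∫⁻ y, ‖deriv (f · y) t‖ₑ ∂μ ≤ ENNReal.ofReal K * μ univ ^ (1 / 2 : ℝ) := by
    intro t ht
    rw [← eLpNorm_one_eq_lintegral_enorm]
    refine (eLpNorm_le_eLpNorm_mul_rpow_measure_univ (p := 1) (q := 2) one_le_two
      (hmeas.comp measurable_prodMk_right).aestronglyMeasurable).trans ?_
    have hexp : 1 / (1 : ℝ≥0∞).toReal - 1 / (2 : ℝ≥0∞).toReal = 1 / 2 := by norm_num
    rw [hexp]
    exact mul_le_mul_left (hK t ht) _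
  calc ∫⁻ y, ‖f b y - f a y‖ₑ ∂μ
      ≤ ∫⁻ y, (∫⁻ t in Ioo a b, ‖deriv (f · y) t‖ₑ) ∂μ := lintegral_mono fun y =>
        enorm_sub_le_lintegral_enorm_deriv hab
          ((hf.comp (continuous_id.prodMk continuous_const)).continuousOn) (hfd y)
    _ = ∫⁻ t in Ioo a b, ∫⁻ y, ‖deriv (f · y) t‖ₑ ∂μ :=
        lintegral_lintegral_swap (hmeas.enorm.aemeasurable)
    _ ≤ ∫⁻ _ in Ioo a b, ENNReal.ofReal K * μ univ ^ (1 / 2 : ℝ) :=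
        setLIntegral_mono measurable_const hslice
    _ = _ := by rw [setLIntegral_const, Real.volume_Ioo]

theorem exists_mem_ball_abs_sub_le_of_eLpNorm_deriv_le {ι : Type*} [Fintype ι]
    {f : ℝ → (ι → ℝ) → ℝ} {a b K r : ℝ} (hab : a ≤ b) (hK₀ : 0 ≤ K) (hr : 0 < r)
    (hf : Continuous (uncurry f)) (hfd : ∀ y, DifferentiableOn ℝ (f · y) (Ioo a b))
    (hK : ∀ t ∈ Ioo a b, eLpNorm (fun y => deriv (f · y) t) 2 volume ≤ ENNReal.ofReal K)
    (x : ι → ℝ) :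
    ∃ y ∈ Metric.ball x r, |f b y - f a y| ≤ K * (b - a) / √((2 * r) ^ Fintype.card ι) := by
  set w : ℝ := (2 * r) ^ Fintype.card ι
  set B := Metric.ball x r
  have hw : 0 < w := by positivity
  have hvol : volume B = ENNReal.ofReal w := Real.volume_pi_ball x hr
  have : IsFiniteMeasure (volume.restrict B) :=
    isFiniteMeasure_restrict.2 (hvol ▸ ENNReal.ofReal_ne_top)
  have hL1 := lintegral_enorm_sub_le_of_eLpNorm_deriv_le (μ := volume.restrict B) hab hf hfd
    fun t ht => (eLpNorm_mono_measure _ Measure.restrict_le_self).trans (hK t ht)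
  rw [Measure.restrict_apply_univ, hvol] at hL1
  have hcont : Continuous fun y => ‖f b y - f a y‖ₑ :=
    ((hf.comp (continuous_const.prodMk continuous_id)).sub
      (hf.comp (continuous_const.prodMk continuous_id))).enorm
  obtain ⟨y, hy, hle⟩ := exists_le_setLAverage (hvol ▸ (ENNReal.ofReal_pos.2 hw).ne')
    (hvol ▸ ENNReal.ofReal_ne_top) hcont.aemeasurable
  refine ⟨y, hy, ?_⟩
  have hsqrt : ENNReal.ofReal w ^ (1 / 2 : ℝ) = ENNReal.ofReal √w := by
    rw [ENNReal.ofReal_rpow_of_nonneg hw.le (by norm_num), Real.sqrt_eq_rpow]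
  have hbound : ENNReal.ofReal K * ENNReal.ofReal w ^ (1 / 2 : ℝ) * ENNReal.ofReal (b - a) /
      ENNReal.ofReal w = ENNReal.ofReal (K * (b - a) / √w) := by
    rw [hsqrt, ← ENNReal.ofReal_mul hK₀, ← ENNReal.ofReal_mul (by positivity),
      ← ENNReal.ofReal_div_of_pos hw]
    congr 1
    have := Real.sq_sqrt hw.le
    field_simp
    rw [this]
    ring
  rw [setLAverage_eq, hvol] at hle
  rw [← ENNReal.ofReal_le_ofReal_iff (by positivity), ← Real.enorm_eq_ofReal_abs, ← hbound]
  exact hle.trans (ENNReal.div_le_div_right hL1 _)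

theorem abs_sub_le_of_holder_of_eLpNorm_le {ι : Type*} [Fintype ι] {v vt : ℝ → (ι → ℝ) → ℝ}
    {a b α M K r : ℝ} (hab : a ≤ b) (hα : 0 < α) (hM : 0 ≤ M) (hK₀ : 0 ≤ K) (hr : 0 < r)
    (hderiv : ∀ y, ∀ t ∈ Icc a b, HasDerivAt (v · y) (vt t y) t)
    (hholder : ∀ t ∈ Icc a b, ∀ y z, |v t y - v t z| ≤ M * ‖y - z‖ ^ α)
    (hK : ∀ t ∈ Icc a b, eLpNorm (vt t) 2 volume ≤ ENNReal.ofReal K) (x : ι → ℝ) :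
    |v a x - v b x| ≤ 2 * (M * r ^ α) + K * (b - a) / √((2 * r) ^ Fintype.card ι) := by
  -- Extended constantly outside `[a, b]`, `v` becomes jointly continuous on `ℝ × (ι → ℝ)`,
  -- which is what the measurability of its time derivative rests on.
  set u : ℝ → (ι → ℝ) → ℝ := fun t => v (projIcc a b hab t)
  have hu_eq : ∀ t ∈ Icc a b, u t = v t := fun t ht => by simp only [u, projIcc_of_mem hab ht]
  have hu_cont : Continuous (uncurry u) := by
    refine continuous_uncurry_of_continuous_of_holder (C := M) hα (fun y => ?_) fun t y z => ?_
    · exact ContinuousOn.comp_continuous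
        (fun t ht => (hderiv y t ht).continuousAt.continuousWithinAt)
        (continuous_subtype_val.comp continuous_projIcc) fun t => (projIcc a b hab t).2
    · simpa only [dist_eq_norm] using hholder _ (projIcc a b hab t).2 y z
  have hu_deriv : ∀ y, ∀ t ∈ Ioo a b, HasDerivAt (u · y) (vt t y) t := fun y t ht =>
    (hderiv y t (Ioo_subset_Icc_self ht)).congr_of_eventuallyEq <|
      eventually_of_mem (Ioo_mem_nhds ht.1 ht.2) fun s hs => by
        simp only [hu_eq s (Ioo_subset_Icc_self hs)]
  obtain ⟨y, hy, hyab⟩ := exists_mem_ball_abs_sub_le_of_eLpNorm_deriv_le hab hK₀ hr hu_cont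
    (fun y t ht => (hu_deriv y t ht).differentiableAt.differentiableWithinAt)
    (fun t ht => by
      simpa only [(hu_deriv _ t ht).deriv] using hK t (Ioo_subset_Icc_self ht)) x
  rw [hu_eq a (left_mem_Icc.2 hab), hu_eq b (right_mem_Icc.2 hab), abs_sub_comm] at hyab
  have hxy : M * ‖x - y‖ ^ α ≤ M * r ^ α := by
    rw [← dist_eq_norm, dist_comm]
    exact mul_le_mul_of_nonneg_left (Real.rpow_le_rpow dist_nonneg (le_of_lt hy) hα.le) hM
  have ha := hholder a (left_mem_Icc.2 hab) x y
  have hb := hholder b (right_mem_Icc.2 hab) y x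
  rw [← norm_neg, neg_sub] at hb
  linarith [abs_sub_le (v a x) (v b y) (v b x), abs_sub_le (v a x) (v a y) (v b y)]

theorem exists_radius_two_mul_rpow_add_div_sqrt_le {α M K δ : ℝ} (hα : α ≤ 1 / 2)
    (hK : 0 ≤ K) (hδ₀ : 0 < δ) (hδ₁ : δ ≤ 1) :
    ∃ r > 0, 2 * (M * r ^ α) + K * δ / √((2 * r) ^ 3) ≤ (2 * M + K) * δ ^ (α / 2) := by
  set s := δ ^ (1 / 4 : ℝ)
  have hs₀ : 0 < s := by positivity
  have hs₁ : s ≤ 1 := Real.rpow_le_one hδ₀.le hδ₁ (by norm_num)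
  have hpow (n : ℕ) (β : ℝ) : (s ^ n) ^ β = s ^ (n * β) := by
    rw [← Real.rpow_natCast, ← Real.rpow_mul hs₀.le]
  have hδ : δ = s ^ 4 := by
    rw [← Real.rpow_natCast, ← Real.rpow_mul hδ₀.le]
    norm_num
  have hsα : (s ^ 2) ^ α = δ ^ (α / 2) := by
    rw [hδ, hpow, hpow]
    ring_nf
  have hlin : s ≤ δ ^ (α / 2) := by
    rw [← hsα, hpow, Nat.cast_ofNat]
    calc s = s ^ (1 : ℝ) := (Real.rpow_one s).symm
      _ ≤ s ^ (2 * α) := Real.rpow_le_rpow_of_exponent_ge hs₀ hs₁ (by linarith)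
  have hsqrt : s ^ 3 ≤ √((2 * s ^ 2) ^ 3) :=
    Real.le_sqrt_of_sq_le (by nlinarith [pow_pos hs₀ 6])
  have hKs : K * δ / √((2 * s ^ 2) ^ 3) ≤ K * s :=
    calc K * δ / √((2 * s ^ 2) ^ 3) ≤ K * s ^ 4 / s ^ 3 := by
          rw [hδ]; exact div_le_div_of_nonneg_left (by positivity) (by positivity) hsqrt
      _ = K * s := by field_simp
  refine ⟨s ^ 2, by positivity, ?_⟩
  rw [hsα]
  nlinarith [mul_le_mul_of_nonneg_left hlin hK]

theorem abs_sub_le_mul_rpow_of_holder_of_eLpNorm_le {v vt : ℝ → (Fin 3 → ℝ) → ℝ}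
    {a b α M K : ℝ} (hab : a ≤ b) (hα₀ : 0 < α) (hα : α ≤ 1 / 2) (hK₀ : 0 ≤ K)
    (hderiv : ∀ y, ∀ t ∈ Icc a b, HasDerivAt (v · y) (vt t y) t)
    (hbdd : ∀ t ∈ Icc a b, ∀ y, |v t y| ≤ M)
    (hholder : ∀ t ∈ Icc a b, ∀ y z, |v t y - v t z| ≤ M * ‖y - z‖ ^ α)
    (hK : ∀ t ∈ Icc a b, eLpNorm (vt t) 2 volume ≤ ENNReal.ofReal K) (x : Fin 3 → ℝ) :
    |v a x - v b x| ≤ (2 * M + K) * (b - a) ^ (α / 2) := by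
  have ha := hbdd a (left_mem_Icc.2 hab) x
  have hb := hbdd b (right_mem_Icc.2 hab) x
  have hM : 0 ≤ M := (abs_nonneg _).trans ha
  rcases hab.eq_or_lt with rfl | hlt
  · simp [Real.zero_rpow (by positivity : α / 2 ≠ 0)]
  rcases le_or_gt (b - a) 1 with hδ₁ | hδ₁
  · obtain ⟨r, hr, hle⟩ := exists_radius_two_mul_rpow_add_div_sqrt_le (M := M) hα hK₀
      (sub_pos.2 hlt) hδ₁
    exact (abs_sub_le_of_holder_of_eLpNorm_le hab hα₀ hM hK₀ hr hderiv hholder hK x).trans hle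
  · have hone : 1 ≤ (b - a) ^ (α / 2) := Real.one_le_rpow hδ₁.le (by positivity)
    calc |v a x - v b x| ≤ 2 * M := by linarith [abs_sub (v a x) (v b x)]
      _ ≤ (2 * M + K) * (b - a) ^ (α / 2) := by nlinarith

open MeasureTheory Set ENNReal in
theorem holder_space_time_general
    (α : ℝ) (hα0 : 0 < α) (hα : α ≤ 1 / 2)
    (T : ℝ)
    (v vt : ℝ → E3 → ℝ)
    (hderiv : ∀ x : E3, ∀ t ∈ Icc (0:ℝ) T, HasDerivAt (fun s => v s x) (vt t x) t)
    (M : ℝ)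
    (hspace : ∀ t ∈ Icc (0:ℝ) T,
      (∀ x : E3, |v t x| ≤ M) ∧ ∀ x y : E3, |v t x - v t y| ≤ M * ‖x - y‖ ^ α)
    (K : ℝ)
    (htime : ∀ t ∈ Icc (0:ℝ) T, eLpNorm (vt t) 2 volume ≤ ENNReal.ofReal K) :
    ∃ C' : ℝ,
      (∀ t ∈ Icc (0:ℝ) T, ∀ x y : E3, |v t x - v t y| ≤ C' * ‖x - y‖ ^ α) ∧
      (∀ x : E3, ∀ t₁ ∈ Icc (0:ℝ) T, ∀ t₂ ∈ Icc (0:ℝ) T,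
        |v t₁ x - v t₂ x| ≤ C' * |t₁ - t₂| ^ (α / 2)) := by
  have htime' : ∀ t ∈ Icc (0:ℝ) T, eLpNorm (vt t) 2 volume ≤ ENNReal.ofReal (max K 0) :=
    fun t ht => (htime t ht).trans (ENNReal.ofReal_le_ofReal (le_max_left K 0))
  refine ⟨2 * M + max K 0, fun t ht x y => ?_, fun x t₁ ht₁ t₂ ht₂ => ?_⟩
  · have hM : 0 ≤ M := (abs_nonneg _).trans ((hspace t ht).1 x)
    exact ((hspace t ht).2 x y).trans (mul_le_mul_of_nonneg_right
      (by linarith [le_max_right K 0]) (by positivity))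
  wlog h : t₁ ≤ t₂ generalizing t₁ t₂
  · simpa only [abs_sub_comm] using this t₂ ht₂ t₁ ht₁ (le_of_not_ge h)
  have hsub : Icc t₁ t₂ ⊆ Icc 0 T := Icc_subset_Icc ht₁.1 ht₂.2
  rw [abs_sub_comm t₁, abs_of_nonneg (sub_nonneg.2 h)]
  exact abs_sub_le_mul_rpow_of_holder_of_eLpNorm_le h hα0 hα (le_max_right K 0)
    (fun y t ht => hderiv y t (hsub ht)) (fun t ht => (hspace t (hsub ht)).1)
    (fun t ht => (hspace t (hsub ht)).2) (fun t ht => htime' t (hsub ht)) x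

open MeasureTheory Set ENNReal in
/-- Lemma `holder-lem`: if `v ∈ L^∞(0,T;C^α(ℝ³))` with
`α ∈ (0,1/2]` and `∂_t v ∈ L^∞(0,T;L²(ℝ³))`, then
`v ∈ C_x^α C_t^{α/2}(ℝ³ × [0,T])`. -/
theorem holder_space_time
    (α : ℝ) (hα0 : 0 < α) (hα : α ≤ 1 / 2)
    (T : ℝ) (hT : 0 < T)
    (v vt : ℝ → E3 → ℝ)
    (hderiv : ∀ x : E3, ∀ t ∈ Icc (0:ℝ) T, HasDerivAt (fun s => v s x) (vt t x) t)
    (M : ℝ)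
    (hspace : ∀ t ∈ Icc (0:ℝ) T,
      (∀ x : E3, |v t x| ≤ M) ∧ ∀ x y : E3, |v t x - v t y| ≤ M * ‖x - y‖ ^ α)
    (K : ℝ)
    (htime : ∀ t ∈ Icc (0:ℝ) T, eLpNorm (vt t) 2 volume ≤ ENNReal.ofReal K) :
    ∃ C' : ℝ,
      (∀ t ∈ Icc (0:ℝ) T, ∀ x y : E3, |v t x - v t y| ≤ C' * ‖x - y‖ ^ α) ∧
      (∀ x : E3, ∀ t₁ ∈ Icc (0:ℝ) T, ∀ t₂ ∈ Icc (0:ℝ) T,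
        |v t₁ x - v t₂ x| ≤ C' * |t₁ - t₂| ^ (α / 2)) :=
  holder_space_time_general α hα0 hα T v vt hderiv M hspace K htime
end
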